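/- Let θ ≥ 0, let A, B ∈ ℝ^{n×n}, and let ε_{klk'l'r} ∈ ℝ, for (k,l,k',l',r) ∈ {1,…,n}^4 × {1,…,R}, satisfy |ε_{klk'l'r}| ≤ θ. Define the error matrix E ∈ ℝ^{n×n} by E_{ij} = Σ_{k,l=1}^n Σ_{k',l'=1}^n a_{kl} b_{k'l'} Σ_{r=1}^R u_{klr} v_{k'l'r} w_{ijr} ε_{klk'l'r}. Then ‖E‖ ≤ θ · √R · ‖A‖ · ‖B‖ · √(Σ_{r=1}^R ‖U_{::r}‖² ‖V_{::r}‖² ‖W_{::r}‖²), where U_{::r} ∈ ℝ^{n×n} is the r-th frontal slice of U (so ‖U_{::r}‖² = Σ_{k,l} u_{klr}²), and similarly for V_{::r} and W_{::r}. -/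

import Mathlib

/-!
The rounding errors `ε k l k' l' r` do not depend on the output position `(i, j)`, so `E` is the
linear combination `∑ r, c r • W_{::r}` of the frontal slices of `W`, with
`c r = ∑ a_{kl} u_{klr} b_{k'l'} v_{k'l'r} ε_{klk'l'r}`. The triangle inequality for the Frobenius
norm gives `‖E‖ ≤ ∑ r, |c r| ‖W_{::r}‖`. Bounding `|ε|` by `θ` splits `|c r|` into a product of
two sums, and Cauchy–Schwarz over `(k, l)` and `(k', l')` gives
`|c r| ≤ θ ‖A‖ ‖U_{::r}‖ ‖B‖ ‖V_{::r}‖`. A last Cauchy–Schwarz over `r` produces the factor `√R`.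
-/

open scoped BigOperators Matrix

/-- Frobenius norm of a real matrix. -/
noncomputable def frob {ι κ : Type*} [Fintype ι] [Fintype κ] (A : Matrix ι κ ℝ) : ℝ :=
  Real.sqrt (∑ i, ∑ j, (A i j) ^ 2)

/-- Frobenius norm of a 6-mode tensor. -/
noncomputable def frob6 {n : ℕ} (T : Fin n → Fin n → Fin n → Fin n → Fin n → Fin n → ℝ) : ℝ :=
  Real.sqrt (∑ k, ∑ l, ∑ k', ∑ l', ∑ i, ∑ j, (T k l k' l' i j) ^ 2)

/-- The 6-mode tensor Y with entries y_{klk'l'ij} = Σ_r u_{klr} v_{k'l'r} w_{ijr}. -/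
noncomputable def Ytens {n R : ℕ} (U V W : Fin n → Fin n → Fin R → ℝ) :
    Fin n → Fin n → Fin n → Fin n → Fin n → Fin n → ℝ :=
  fun k l k' l' i j => ∑ r, U k l r * V k' l' r * W i j r

/-- The exact matrix-multiplication tensor X, x_{klk'l'ij} = δ_{ki} δ_{l'j} δ_{lk'}. -/
def Xtens (n : ℕ) : Fin n → Fin n → Fin n → Fin n → Fin n → Fin n → ℝ :=
  fun k l k' l' i j =>
    (if k = i then (1 : ℝ) else 0) * (if l' = j then (1 : ℝ) else 0) *
      (if l = k' then (1 : ℝ) else 0)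

/-- The block bilinear computation f on (mn)×(mn) matrices indexed by Fin n × Fin m
(first index: block position, second index: position within the m×m block). -/
noncomputable def blinf {n R m : ℕ} (U V W : Fin n → Fin n → Fin R → ℝ)
    (A B : Matrix (Fin n × Fin m) (Fin n × Fin m) ℝ) :
    Matrix (Fin n × Fin m) (Fin n × Fin m) ℝ :=
  fun p q => ∑ r, W p.1 q.1 r *
    ∑ z, (∑ k, ∑ l, U k l r * A (k, p.2) (l, z)) *
         (∑ k', ∑ l', V k' l' r * B (k', z) (l', q.2))

/-- κ = n⁻³ Σ_{i,j,l} (1 − Σ_r u_{ilr} v_{ljr} w_{ijr}). -/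
noncomputable def kappa {n R : ℕ} (U V W : Fin n → Fin n → Fin R → ℝ) : ℝ :=
  ((n : ℝ) ^ 3)⁻¹ * ∑ i, ∑ j, ∑ l, (1 - ∑ r, U i l r * V l j r * W i j r)

/-- M = P S : block matrix with m×m block s(j)·I_m at block position (π(j), j). -/
def Mmat {n : ℕ} (m : ℕ) (s : Fin n → ℝ) (π : Equiv.Perm (Fin n)) :
    Matrix (Fin n × Fin m) (Fin n × Fin m) ℝ :=
  fun p q => if p.1 = π q.1 ∧ p.2 = q.2 then s q.1 else 0

/-- The randomized bilinear computation f̂(A,B) = (1−κ)⁻¹ M₁ᵀ f(M₁AM₂ᵀ, M₂BM₃ᵀ) M₃. -/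
noncomputable def fhat {n R : ℕ} (m : ℕ) (U V W : Fin n → Fin n → Fin R → ℝ)
    (s₁ s₂ s₃ : Fin n → ℝ) (π₁ π₂ π₃ : Equiv.Perm (Fin n))
    (A B : Matrix (Fin n × Fin m) (Fin n × Fin m) ℝ) :
    Matrix (Fin n × Fin m) (Fin n × Fin m) ℝ :=
  (1 - kappa U V W)⁻¹ •
    ((Mmat m s₁ π₁)ᵀ *
      blinf U V W (Mmat m s₁ π₁ * A * (Mmat m s₂ π₂)ᵀ) (Mmat m s₂ π₂ * B * (Mmat m s₃ π₃)ᵀ) *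
      Mmat m s₃ π₃)


open Finset

def frontalSlice {ι κ ρ : Type*} (U : ι → κ → ρ → ℝ) (r : ρ) : Matrix ι κ ℝ :=
  Matrix.of fun i j => U i j r

section Frobenius

variable {ι κ : Type*} [Fintype ι] [Fintype κ]

lemma frob_nonneg (A : Matrix ι κ ℝ) : 0 ≤ frob A :=
  Real.sqrt_nonneg _

lemma frob_sq (A : Matrix ι κ ℝ) : frob A ^ 2 = ∑ i, ∑ j, A i j ^ 2 :=
  Real.sq_sqrt (by positivity)

attribute [local instance] Matrix.frobeniusNormedAddCommGroup Matrix.frobeniusNormedSpace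

lemma frob_eq_norm (A : Matrix ι κ ℝ) : frob A = ‖A‖ := by
  simp only [frob, Matrix.frobenius_norm_def, Real.norm_eq_abs, Real.rpow_two, sq_abs,
    Real.sqrt_eq_rpow, one_div]

lemma frob_sum_smul_le {ρ : Type*} (s : Finset ρ) (c : ρ → ℝ) (W : ρ → Matrix ι κ ℝ) :
    frob (∑ r ∈ s, c r • W r) ≤ ∑ r ∈ s, |c r| * frob (W r) := by
  simp only [frob_eq_norm, ← Real.norm_eq_abs, ← norm_smul]
  exact norm_sum_le _ _

lemma sum_sum_abs_mul_le_frob_mul_frob (A X : Matrix ι κ ℝ) :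
    ∑ i, ∑ j, |A i j * X i j| ≤ frob A * frob X := by
  simpa only [frob, ← Fintype.sum_prod_type', abs_mul, sq_abs] using
    Real.sum_mul_le_sqrt_mul_sqrt univ (fun p : ι × κ => |A p.1 p.2|) (fun p => |X p.1 p.2|)

end Frobenius

lemma abs_sum_mul_mul_le {ι κ ι' κ' : Type*} [Fintype ι] [Fintype κ] [Fintype ι'] [Fintype κ']
    (x : Matrix ι κ ℝ) (y : Matrix ι' κ' ℝ) (e : ι → κ → ι' → κ' → ℝ) {θ : ℝ}
    (he : ∀ i j i' j', |e i j i' j'| ≤ θ) :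
    |∑ i, ∑ j, ∑ i', ∑ j', x i j * y i' j' * e i j i' j'| ≤
      θ * (∑ i, ∑ j, |x i j|) * ∑ i', ∑ j', |y i' j'| := by
  calc |∑ i, ∑ j, ∑ i', ∑ j', x i j * y i' j' * e i j i' j'|
      ≤ ∑ i, ∑ j, ∑ i', ∑ j', |x i j| * |y i' j'| * θ := by
        refine (abs_sum_le_sum_abs _ _).trans (sum_le_sum fun i _ => ?_)
        refine (abs_sum_le_sum_abs _ _).trans (sum_le_sum fun j _ => ?_)
        refine (abs_sum_le_sum_abs _ _).trans (sum_le_sum fun i' _ => ?_)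
        refine (abs_sum_le_sum_abs _ _).trans (sum_le_sum fun j' _ => ?_)
        rw [abs_mul, abs_mul]
        gcongr
        exact he i j i' j'
    _ = θ * (∑ i, ∑ j, |x i j|) * ∑ i', ∑ j', |y i' j'| := by
        simp only [← sum_mul, ← mul_sum]
        ring

lemma sum_le_sqrt_card_mul_sqrt_sum_sq {ρ : Type*} (s : Finset ρ) (x : ρ → ℝ) :
    ∑ r ∈ s, x r ≤ √(#s : ℝ) * √(∑ r ∈ s, x r ^ 2) := by
  simpa using Real.sum_mul_le_sqrt_mul_sqrt s (fun _ => 1) x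

section ErrorCoeff

variable {ι κ ι' κ' ρ : Type*} [Fintype ι] [Fintype κ] [Fintype ι'] [Fintype κ']

def errorCoeff (A : Matrix ι κ ℝ) (B : Matrix ι' κ' ℝ) (U : ι → κ → ρ → ℝ)
    (V : ι' → κ' → ρ → ℝ) (ε : ι → κ → ι' → κ' → ρ → ℝ) (r : ρ) : ℝ :=
  ∑ k, ∑ l, ∑ k', ∑ l', (A k l * U k l r) * (B k' l' * V k' l' r) * ε k l k' l' r

lemma sum_mul_sum_eq_sum_mul_errorCoeff [Fintype ρ] (A : Matrix ι κ ℝ) (B : Matrix ι' κ' ℝ)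
    (U : ι → κ → ρ → ℝ) (V : ι' → κ' → ρ → ℝ) (w : ρ → ℝ) (ε : ι → κ → ι' → κ' → ρ → ℝ) :
    ∑ k, ∑ l, ∑ k', ∑ l', A k l * B k' l' * ∑ r, U k l r * V k' l' r * w r * ε k l k' l' r =
      ∑ r, errorCoeff A B U V ε r * w r := by
  simp only [errorCoeff, sum_mul, mul_sum]
  symm
  refine sum_comm.trans <| sum_congr rfl fun k _ => sum_comm.trans <| sum_congr rfl fun l _ =>
    sum_comm.trans <| sum_congr rfl fun k' _ => sum_comm.trans <| sum_congr rfl fun l' _ =>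
      sum_congr rfl fun r _ => by ring

lemma abs_errorCoeff_le (A : Matrix ι κ ℝ) (B : Matrix ι' κ' ℝ) (U : ι → κ → ρ → ℝ)
    (V : ι' → κ' → ρ → ℝ) (ε : ι → κ → ι' → κ' → ρ → ℝ) {θ : ℝ} (hθ : 0 ≤ θ) (r : ρ)
    (hε : ∀ k l k' l', |ε k l k' l' r| ≤ θ) :
    |errorCoeff A B U V ε r| ≤
      θ * (frob A * frob (frontalSlice U r)) * (frob B * frob (frontalSlice V r)) :=
  (abs_sum_mul_mul_le _ _ _ hε).trans <|
    mul_le_mul (mul_le_mul_of_nonneg_left (sum_sum_abs_mul_le_frob_mul_frob A _) hθ)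
      (sum_sum_abs_mul_le_frob_mul_frob B _) (by positivity)
      (mul_nonneg hθ (mul_nonneg (frob_nonneg _) (frob_nonneg _)))

end ErrorCoeff

theorem stmt15_general (n R : ℕ)
    (U V W : Fin n → Fin n → Fin R → ℝ)
    (θ : ℝ) (hθ : 0 ≤ θ)
    (A B : Matrix (Fin n) (Fin n) ℝ)
    (ε : Fin n → Fin n → Fin n → Fin n → Fin R → ℝ)
    (hε : ∀ k l k' l' r, |ε k l k' l' r| ≤ θ)
    (E : Matrix (Fin n) (Fin n) ℝ)
    (hE : ∀ i j, E i j = ∑ k, ∑ l, ∑ k', ∑ l',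
      A k l * B k' l' * ∑ r, U k l r * V k' l' r * W i j r * ε k l k' l' r) :
    frob E ≤ θ * Real.sqrt R * frob A * frob B *
      Real.sqrt (∑ r, (∑ k, ∑ l, (U k l r) ^ 2) * (∑ k, ∑ l, (V k l r) ^ 2) *
        (∑ k, ∑ l, (W k l r) ^ 2)) := by
  set c := errorCoeff A B U V ε
  set x : Fin R → ℝ := fun r =>
    frob (frontalSlice U r) * frob (frontalSlice V r) * frob (frontalSlice W r)
  have hEc : E = ∑ r, c r • frontalSlice W r := by
    ext i j
    simp only [hE, sum_mul_sum_eq_sum_mul_errorCoeff, Matrix.sum_apply, Matrix.smul_apply,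
      frontalSlice, Matrix.of_apply, smul_eq_mul, c]
  have hθAB : 0 ≤ θ * frob A * frob B := mul_nonneg (mul_nonneg hθ (frob_nonneg A)) (frob_nonneg B)
  calc frob E ≤ ∑ r, |c r| * frob (frontalSlice W r) := hEc ▸ frob_sum_smul_le _ _ _
    _ ≤ ∑ r, θ * frob A * frob B * x r := sum_le_sum fun r _ =>
        (mul_le_mul_of_nonneg_right (abs_errorCoeff_le A B U V ε hθ r (hε · · · · r))
          (frob_nonneg _)).trans_eq (by ring)
    _ = θ * frob A * frob B * ∑ r, x r := (mul_sum _ _ _).symm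
    _ ≤ θ * frob A * frob B * (√(#(univ : Finset (Fin R)) : ℝ) * √(∑ r, x r ^ 2)) :=
        mul_le_mul_of_nonneg_left (sum_le_sqrt_card_mul_sqrt_sum_sq _ _) hθAB
    _ = _ := by
        simp only [x, mul_pow, frob_sq, frontalSlice, Matrix.of_apply, card_univ,
          Fintype.card_fin]
        ring

theorem stmt15 (n R : ℕ) (hn : 0 < n) (hR : 0 < R)
    (U V W : Fin n → Fin n → Fin R → ℝ)
    (θ : ℝ) (hθ : 0 ≤ θ)
    (A B : Matrix (Fin n) (Fin n) ℝ)
    (ε : Fin n → Fin n → Fin n → Fin n → Fin R → ℝ)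
    (hε : ∀ k l k' l' r, |ε k l k' l' r| ≤ θ)
    (E : Matrix (Fin n) (Fin n) ℝ)
    (hE : ∀ i j, E i j = ∑ k, ∑ l, ∑ k', ∑ l',
      A k l * B k' l' * ∑ r, U k l r * V k' l' r * W i j r * ε k l k' l' r) :
    frob E ≤ θ * Real.sqrt R * frob A * frob B *
      Real.sqrt (∑ r, (∑ k, ∑ l, (U k l r) ^ 2) * (∑ k, ∑ l, (V k l r) ^ 2) *
        (∑ k, ∑ l, (W k l r) ^ 2)) :=
  stmt15_general n R U V W θ hθ A B ε hε E hE
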